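/- Let R be a TRS over sign(R), let Σ = {f, ♯} ∪ sign(R) with f a fresh binary symbol and ♯ a fresh constant, and let Γ be a ranked alphabet with sign(R) ⊆ Γ. Number the symbols of Γ − sign(R) from 1 to |Γ − sign(R)|, and to each g ∈ Γ − sign(R) of arity k with number l assign t_g = f(left_k, right_l), where right₀ = ♯, right_{n+1} = f(♯, right_n), left₀ = ♯, left_{n+1} = f(left_n, x_{n+1}). Let S = {g(x₁,…,x_k) → t_g : k ≥ 0, g ∈ Γ_k − sign(R)}, which is a convergent TRS, and for L ⊆ T_Γ let S(L) be the set of S-normal forms of the members of L. Then: L is finite if and only if S(L) is finite, and L is a recognizable tree language if and only if S(L) is a recognizable tree language. -/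

import Mathlib

set_option autoImplicit false

/-!
Basic framework: ranked alphabets, terms, term rewrite systems,
bottom-up tree automata, recognizability.
A ranked alphabet is modelled by a (finite) type `σ` together with an
arity function `ar : σ → ℕ`.  `Tm.var n` denotes the variable `x_{n+1}`,
so `T_Σ(X_m)` corresponds to terms all of whose variables satisfy `n < m`,
and ground terms (`T_Σ`) are terms satisfying `Tm.Ground`.
-/

/-- Terms over the ranked alphabet `(σ, ar)` with variables `x₁, x₂, …`
(`var n` is `x_{n+1}`). -/
inductive Tm (σ : Type) (ar : σ → ℕ) : Type
  | var : ℕ → Tm σ ar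
  | app : (f : σ) → (Fin (ar f) → Tm σ ar) → Tm σ ar

namespace Tm

variable {σ γ : Type} {ar : σ → ℕ} {arγ : γ → ℕ}

/-- Application of a substitution `θ` (assigning a term to each variable). -/
def subst (θ : ℕ → Tm σ ar) : Tm σ ar → Tm σ ar
  | var n => θ n
  | app f ts => app f fun i => (ts i).subst θ

/-- A term is ground if it contains no variables. -/
def Ground : Tm σ ar → Prop
  | var _ => False
  | app _ ts => ∀ i, (ts i).Ground

/-- The set of (indices of) variables occurring in a term. -/
def vars : Tm σ ar → Set ℕ
  | var n => {n}
  | app _ ts => ⋃ i, (ts i).vars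

/-- Number of occurrences of the variable `x_{n+1}` in a term. -/
def count (n : ℕ) : Tm σ ar → ℕ
  | var m => if m = n then 1 else 0
  | app _ ts => ∑ i, (ts i).count n

/-- A term is linear if every variable occurs at most once in it. -/
def Linear (t : Tm σ ar) : Prop := ∀ n, t.count n ≤ 1

/-- The symbol `s` occurs in the term. -/
def symOccurs (s : σ) : Tm σ ar → Prop
  | var _ => False
  | app f ts => f = s ∨ ∃ i, (ts i).symOccurs s

/-- Height of a term (constants and variables have height 0). -/
def height : Tm σ ar → ℕ
  | var _ => 0
  | app _ ts => Finset.univ.sup fun i => (ts i).height + 1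

/-- Renaming of the alphabet along an arity-preserving map. -/
def map (ι : σ → γ) (h : ∀ s, arγ (ι s) = ar s) : Tm σ ar → Tm γ arγ
  | var n => var n
  | app f ts => app (ι f) fun i => (ts (Fin.cast (h f) i)).map ι h

/-- The subterm of `t` at a position (a list of argument indices), if defined. -/
def subAt : Tm σ ar → List ℕ → Option (Tm σ ar)
  | t, [] => some t
  | var _, _ :: _ => none
  | app f ts, i :: p => if h : i < ar f then (ts ⟨i, h⟩).subAt p else none

/-- Subterm relation. -/
inductive Subtm : Tm σ ar → Tm σ ar → Prop
  | refl (t : Tm σ ar) : Subtm t t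
  | app {s : Tm σ ar} {f : σ} {ts : Fin (ar f) → Tm σ ar} (i : Fin (ar f)) :
      Subtm s (ts i) → Subtm s (Tm.app f ts)

end Tm

section Rewriting

variable {σ γ : Type} {ar : σ → ℕ} {arγ : γ → ℕ}

/-- One-step rewriting by the rule set `R`: apply a rule under a substitution
at the root, or rewrite inside one argument. -/
inductive Step (R : Set (Tm σ ar × Tm σ ar)) : Tm σ ar → Tm σ ar → Prop
  | rule {l r : Tm σ ar} (θ : ℕ → Tm σ ar) (h : (l, r) ∈ R) :
      Step R (l.subst θ) (r.subst θ)
  | congr {f : σ} {ts : Fin (ar f) → Tm σ ar} {t' : Tm σ ar} (i : Fin (ar f)) :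
      Step R (ts i) t' → Step R (Tm.app f ts) (Tm.app f (Function.update ts i t'))

/-- Many-step rewriting: reflexive-transitive closure of `Step`. -/
def Steps (R : Set (Tm σ ar × Tm σ ar)) : Tm σ ar → Tm σ ar → Prop :=
  Relation.ReflTransGen (Step R)

/-- `R` is a term rewrite system: finitely many rules, and every variable of a
right-hand side occurs in the corresponding left-hand side. -/
def IsTRS (R : Set (Tm σ ar × Tm σ ar)) : Prop :=
  R.Finite ∧ ∀ lr ∈ R, lr.2.vars ⊆ lr.1.vars

/-- The set `R*(L)` of descendants of members of `L`. -/
def Desc (R : Set (Tm σ ar × Tm σ ar)) (L : Set (Tm σ ar)) : Set (Tm σ ar) :=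
  {p | ∃ q ∈ L, Steps R q p}

/-- `R` is terminating: there is no infinite reduction sequence. -/
def Terminating (R : Set (Tm σ ar × Tm σ ar)) : Prop :=
  ¬ ∃ f : ℕ → Tm σ ar, ∀ n, Step R (f n) (f (n + 1))

/-- `R` is confluent. -/
def Confluent (R : Set (Tm σ ar × Tm σ ar)) : Prop :=
  ∀ a b c, Steps R a b → Steps R a c → ∃ d, Steps R b d ∧ Steps R c d

/-- `u` is an `R`-normal form of `t`. -/
def NormalFormOf (R : Set (Tm σ ar × Tm σ ar)) (t u : Tm σ ar) : Prop :=
  Steps R t u ∧ ¬ ∃ v, Step R u v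

/-- The term is a variable. -/
def IsVarTm (t : Tm σ ar) : Prop := ∃ n, t = Tm.var n

/-- Every left-hand side is linear. -/
def LeftLinearTRS (R : Set (Tm σ ar × Tm σ ar)) : Prop :=
  ∀ lr ∈ R, lr.1.Linear

/-- All left- and right-hand sides are linear. -/
def LinearTRS (R : Set (Tm σ ar × Tm σ ar)) : Prop :=
  ∀ lr ∈ R, lr.1.Linear ∧ lr.2.Linear

/-- No rule has a variable as left-hand side or as right-hand side. -/
def CollapseFree (R : Set (Tm σ ar × Tm σ ar)) : Prop :=
  ∀ lr ∈ R, ¬ IsVarTm lr.1 ∧ ¬ IsVarTm lr.2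

/-- Transport of a rule set along an arity-preserving renaming of the alphabet. -/
def mapRules (ι : σ → γ) (h : ∀ s, arγ (ι s) = ar s) (R : Set (Tm σ ar × Tm σ ar)) :
    Set (Tm γ arγ × Tm γ arγ) :=
  (fun lr => (lr.1.map ι h, lr.2.map ι h)) '' R

end Rewriting

/-- A bottom-up tree automaton over `(σ, ar)` with state type `Q`:
transition rules `δ(q₁,…,qₙ) → q`, λ-rules `q → q'`, and final states. -/
structure BTA (σ : Type) (ar : σ → ℕ) (Q : Type) where
  trans : ∀ f : σ, (Fin (ar f) → Q) → Q → Prop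
  eps : Q → Q → Prop
  final : Q → Prop

namespace BTA

variable {σ : Type} {ar : σ → ℕ} {Q : Type}

/-- `t →* q`: the (ground) term `t` can be rewritten to the state `q`. -/
inductive Reach (A : BTA σ ar Q) : Tm σ ar → Q → Prop
  | app {f : σ} {ts : Fin (ar f) → Tm σ ar} {qs : Fin (ar f) → Q} {q : Q} :
      (∀ i, Reach A (ts i) (qs i)) → A.trans f qs q → Reach A (Tm.app f ts) q
  | eps {t : Tm σ ar} {q q' : Q} : Reach A t q → A.eps q q' → Reach A t q'

/-- The tree language recognized by the automaton. -/
def Lang (A : BTA σ ar Q) : Set (Tm σ ar) := {t | ∃ q, A.final q ∧ A.Reach t q}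

end BTA

/-- A tree language is recognizable if some bottom-up tree automaton with a
finite state set recognizes it. -/
def Recognizable {σ : Type} {ar : σ → ℕ} (L : Set (Tm σ ar)) : Prop :=
  ∃ (Q : Type) (_ : Finite Q) (A : BTA σ ar Q), A.Lang = L

/-- `R` (a TRS over all of `σ`, thought of as `sign(R)`) preserves
recognizability of finite tree languages: for every ranked alphabet extending
`σ` (i.e. every finite type with an arity-preserving injection from `σ`) and
every finite tree language of ground terms, the descendant set is recognizable. -/
def PRF {σ : Type} {ar : σ → ℕ} (R : Set (Tm σ ar × Tm σ ar)) : Prop :=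
  ∀ (γ : Type) (arγ : γ → ℕ), Finite γ →
    ∀ ι : σ → γ, Function.Injective ι →
      ∀ h : ∀ s, arγ (ι s) = ar s,
        ∀ L : Set (Tm γ arγ), L.Finite → (∀ t ∈ L, t.Ground) →
          Recognizable (Desc (mapRules ι h R) L)

/-- `R` preserves recognizability: as `PRF`, but for arbitrary recognizable
tree languages. -/
def PR {σ : Type} {ar : σ → ℕ} (R : Set (Tm σ ar × Tm σ ar)) : Prop :=
  ∀ (γ : Type) (arγ : γ → ℕ), Finite γ →
    ∀ ι : σ → γ, Function.Injective ι →
      ∀ h : ∀ s, arγ (ι s) = ar s,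
        ∀ L : Set (Tm γ arγ), Recognizable L →
          Recognizable (Desc (mapRules ι h R) L)

/-! ### Extending an alphabet by a fresh binary symbol `f` and a fresh
constant `♯`: the alphabet `γ ⊕ Bool`, where `Sum.inr true` is `f` (arity 2)
and `Sum.inr false` is `♯` (arity 0). -/

/-- Arity function of `Σ = {f, ♯} ∪ Γ`. -/
def arExt {γ : Type} (arγ : γ → ℕ) : γ ⊕ Bool → ℕ :=
  Sum.elim arγ fun b => cond b 2 0

/-! ### The comb construction (used in Statements 9 and 10).
`Γ` is a ranked alphabet containing `sign(R)` (via the injection `ι`), and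
`Γ ∪ {f, ♯}` is modelled by `γ ⊕ Bool` with `arExt`. -/

section Comb

variable {γ : Type} {arγ : γ → ℕ}

/-- the fresh constant `♯` -/
def shE : Tm (γ ⊕ Bool) (arExt arγ) := .app (Sum.inr false) ![]

/-- `f(a, b)` for the fresh binary symbol `f` -/
def fE (a b : Tm (γ ⊕ Bool) (arExt arγ)) : Tm (γ ⊕ Bool) (arExt arγ) :=
  .app (Sum.inr true) ![a, b]

/-- the right combs: `right₀ = ♯`, `right_{n+1} = f(♯, right_n)` -/
def rightCombE : ℕ → Tm (γ ⊕ Bool) (arExt arγ)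
  | 0 => shE
  | n + 1 => fE shE (rightCombE n)

/-- the left combs: `left₀ = ♯`, `left_{n+1} = f(left_n, x_{n+1})`
(recall `Tm.var n` is the variable `x_{n+1}`) -/
def leftCombE : ℕ → Tm (γ ⊕ Bool) (arExt arγ)
  | 0 => shE
  | n + 1 => fE (leftCombE n) (.var n)

/-- The TRS `S = { g(x₁,…,x_k) → t_g : g ∈ Γ − sign(R) of arity k }`,
where `t_g = f(left_k, right_{num g})`. -/
def combTRS (ι : γ → Prop) (num : γ → ℕ) :
    Set (Tm (γ ⊕ Bool) (arExt arγ) × Tm (γ ⊕ Bool) (arExt arγ)) :=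
  {p | ∃ g : γ, ¬ ι g ∧
    p = (Tm.app (Sum.inl g) fun i => Tm.var (i : Fin (arγ g)).1,
         fE (leftCombE (arγ g)) (rightCombE (num g)))}

end Comb

/-! ### Statement 10: `L` finite iff `S(L)` finite, and `L` recognizable iff
`S(L)` recognizable, for the comb TRS `S`. -/

/-!
Rewriting with `combTRS` replaces each symbol `g ∉ sign(R)` by its comb `t_g`, and the result does
not depend on the order of the steps: `combNormalize` is invariant under rewriting and irreducible,
so `S(L)` is the image of `L` under the tree homomorphism `combNF`. This homomorphism is injective,
because distinct symbols get distinct right combs and the left comb of `g` keeps the arguments of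
`g` in order; hence the finiteness part. A tree automaton `B` for `S(L)` is pulled back to `Γ` by
running `B` on `combNF g(x₁,…,x_k)` at each symbol `g`, and an automaton `A` for `L` is pushed
forward by an automaton that reads a right comb by its length and a partial left comb by the
states of `A` at its leaves; there are finitely many such states because `Γ` is finite.
-/

theorem Steps.app_update {σ : Type} {ar : σ → ℕ} {R : Set (Tm σ ar × Tm σ ar)} {c : σ}
    (ts : Fin (ar c) → Tm σ ar) (i : Fin (ar c)) {t : Tm σ ar} (h : Steps R (ts i) t) :
    Steps R (.app c ts) (.app c (Function.update ts i t)) := by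
  induction h with
  | refl => rw [Function.update_eq_self]; exact Relation.ReflTransGen.refl
  | tail _ hstep ih =>
    refine ih.tail ?_
    have := Step.congr (ts := Function.update ts i _) i (by rw [Function.update_self]; exact hstep)
    rwa [Function.update_idem] at this

theorem Steps.app_congr {σ : Type} {ar : σ → ℕ} {R : Set (Tm σ ar × Tm σ ar)} {c : σ}
    {ts ts' : Fin (ar c) → Tm σ ar} (h : ∀ i, Steps R (ts i) (ts' i)) :
    Steps R (.app c ts) (.app c ts') := by
  classical
  let mix (s : Finset (Fin (ar c))) : Fin (ar c) → Tm σ ar := fun i => if i ∈ s then ts' i else ts i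
  suffices ∀ s, Steps R (.app c ts) (.app c (mix s)) by simpa [mix] using this Finset.univ
  intro s
  induction s using Finset.induction_on with
  | empty => simp only [mix, Finset.notMem_empty, if_false]; exact Relation.ReflTransGen.refl
  | @insert j s hj ih =>
    have hmix : mix (insert j s) = Function.update (mix s) j (ts' j) := by
      funext i
      by_cases hij : i = j
      · subst hij; simp [mix]
      · simp [mix, hij]
    rw [hmix]
    exact ih.trans (Steps.app_update _ j (by simpa [mix, hj] using h j))

namespace BTA

variable {σ : Type} {ar : σ → ℕ} {Q : Type} {A : BTA σ ar Q}

theorem Reach.eps_star {t : Tm σ ar} {q q' : Q} (h : A.Reach t q)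
    (he : Relation.ReflTransGen A.eps q q') : A.Reach t q' := by
  induction he with
  | refl => exact h
  | tail _ hstep ih => exact ih.eps hstep

theorem not_reach_var (n : ℕ) (q : Q) : ¬ A.Reach (.var n) q := by
  intro h
  generalize ht : (Tm.var n : Tm σ ar) = t at h
  induction h with
  | app => cases ht
  | eps _ _ ih => exact ih ht

theorem reach_app_iff {f : σ} {ts : Fin (ar f) → Tm σ ar} {q : Q} :
    A.Reach (.app f ts) q ↔ ∃ qs q₀, (∀ i, A.Reach (ts i) (qs i)) ∧ A.trans f qs q₀ ∧
      Relation.ReflTransGen A.eps q₀ q := by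
  constructor
  · intro h
    generalize ht : Tm.app f ts = t at h
    induction h with
    | app hr htr => cases ht; exact ⟨_, _, hr, htr, .refl⟩
    | eps _ hstep ih =>
      obtain ⟨qs, q₀, hr, htr, he⟩ := ih ht
      exact ⟨qs, q₀, hr, htr, he.tail hstep⟩
  · rintro ⟨qs, q₀, hr, htr, he⟩
    exact (Reach.app hr htr).eps_star he

end BTA

section Comb

variable {γ : Type} {arγ : γ → ℕ} {P : γ → Prop} {num : γ → ℕ} {Q : Type} {M : ℕ}
  {A : BTA γ arγ Q} {B : BTA (γ ⊕ Bool) (arExt arγ) Q} {L : Set (Tm γ arγ)}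

local notation "𝕋" => Tm (γ ⊕ Bool) (arExt arγ)

theorem subst_shE (θ : ℕ → 𝕋) : (shE : 𝕋).subst θ = shE := by
  simp only [shE, Tm.subst]
  congr
  funext i
  exact i.elim0

theorem subst_fE (a b : 𝕋) (θ : ℕ → 𝕋) : (fE a b).subst θ = fE (a.subst θ) (b.subst θ) := by
  simp only [fE, Tm.subst]
  congr
  funext i
  fin_cases i <;> rfl

theorem subst_rightCombE (θ : ℕ → 𝕋) (n : ℕ) : (rightCombE n : 𝕋).subst θ = rightCombE n := by
  induction n with
  | zero => exact subst_shE θ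
  | succ n ih => rw [rightCombE, subst_fE, subst_shE, ih]

theorem app_inr_false_eq_shE (ts : Fin (arExt arγ (.inr false)) → 𝕋) :
    Tm.app (Sum.inr false) ts = shE :=
  congrArg _ (funext fun i => i.elim0)

theorem app_inr_true_eq_fE (ts : Fin (arExt arγ (.inr true)) → 𝕋) :
    Tm.app (Sum.inr true) ts = fE (ts (0 : Fin 2)) (ts (1 : Fin 2)) :=
  congrArg _ (FinVec.etaExpand_eq (α := 𝕋) ts).symm

theorem fE_inj {a b a' b' : 𝕋} : fE a b = fE a' b' ↔ a = a' ∧ b = b' := by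
  refine ⟨fun h => ?_, fun ⟨ha, hb⟩ => ha ▸ hb ▸ rfl⟩
  injection h with _ h
  exact ⟨congrFun h 0, congrFun h 1⟩

theorem shE_ne_fE (a b : 𝕋) : shE ≠ fE a b := by
  rintro ⟨⟩

theorem rightCombE_injective : Function.Injective (rightCombE : ℕ → 𝕋) := by
  intro m n h
  induction m generalizing n with
  | zero => cases n with
    | zero => rfl
    | succ n => exact absurd h (shE_ne_fE _ _)
  | succ m ih => cases n with
    | zero => exact absurd h.symm (shE_ne_fE _ _)
    | succ n => rw [ih (fE_inj.mp h).2]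

def leftCombFill : {k : ℕ} → (Fin k → 𝕋) → 𝕋
  | 0, _ => shE
  | k + 1, ts => fE (leftCombFill (Fin.init ts)) (ts (Fin.last k))

theorem subst_leftCombE (θ : ℕ → 𝕋) :
    ∀ k, (leftCombE k : 𝕋).subst θ = leftCombFill fun i : Fin k => θ i
  | 0 => subst_shE θ
  | k + 1 => by rw [leftCombE, subst_fE, subst_leftCombE θ k]; rfl

theorem leftCombFill_snoc {k : ℕ} (ts : Fin k → 𝕋) (t : 𝕋) :
    leftCombFill (Fin.snoc ts t : Fin (k + 1) → 𝕋) = fE (leftCombFill ts) t := by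
  simp only [leftCombFill, Fin.init_snoc, Fin.snoc_last]

theorem leftCombFill_injective {k : ℕ} :
    Function.Injective (leftCombFill : (Fin k → 𝕋) → 𝕋) := by
  induction k with
  | zero => intro ts ts' _; exact funext fun i => i.elim0
  | succ k ih =>
    intro ts ts' h
    obtain ⟨h_init, h_last⟩ := fE_inj.mp h
    rw [← Fin.snoc_init_self ts, ← Fin.snoc_init_self ts', ih h_init, h_last]

open Classical in
noncomputable def combNormalize (P : γ → Prop) (num : γ → ℕ) : 𝕋 → 𝕋
  | .var n => .var n
  | .app (.inr b) ts => .app (.inr b) fun i => combNormalize P num (ts i)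
  | .app (.inl g) ts =>
    if P g then .app (.inl g) fun i => combNormalize P num (ts i)
    else fE (leftCombFill fun i => combNormalize P num (ts i)) (rightCombE (num g))

theorem combNormalize_app_inr (b : Bool) (ts : Fin (arExt arγ (.inr b)) → 𝕋) :
    combNormalize P num (.app (.inr b) ts) = .app (.inr b) fun i => combNormalize P num (ts i) := by
  rw [combNormalize]

theorem combNormalize_app_inl_of_pos {g : γ} (hg : P g) (ts : Fin (arExt arγ (.inl g)) → 𝕋) :
    combNormalize P num (.app (.inl g) ts) = .app (.inl g) fun i => combNormalize P num (ts i) := by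
  rw [combNormalize, if_pos hg]

theorem combNormalize_app_inl_of_neg {g : γ} (hg : ¬ P g) (ts : Fin (arExt arγ (.inl g)) → 𝕋) :
    combNormalize P num (.app (.inl g) ts) =
      fE (leftCombFill fun i => combNormalize P num (ts i)) (rightCombE (num g)) := by
  rw [combNormalize, if_neg hg]

theorem combNormalize_shE : combNormalize P num (shE : 𝕋) = shE :=
  (combNormalize_app_inr false _).trans (app_inr_false_eq_shE _)

theorem combNormalize_fE (a b : 𝕋) :
    combNormalize P num (fE a b) = fE (combNormalize P num a) (combNormalize P num b) :=
  (combNormalize_app_inr true _).trans (app_inr_true_eq_fE _)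

theorem combNormalize_rightCombE (n : ℕ) : combNormalize P num (rightCombE n : 𝕋) = rightCombE n := by
  induction n with
  | zero => exact combNormalize_shE
  | succ n ih => rw [rightCombE, combNormalize_fE, combNormalize_shE, ih]

theorem combNormalize_leftCombFill {k : ℕ} (ts : Fin k → 𝕋) :
    combNormalize P num (leftCombFill ts) = leftCombFill fun i => combNormalize P num (ts i) := by
  induction k with
  | zero => exact combNormalize_shE
  | succ k ih => rw [leftCombFill, leftCombFill, combNormalize_fE, ih]; rfl

theorem combNormalize_app_congr {c : γ ⊕ Bool} {ts ts' : Fin (arExt arγ c) → 𝕋}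
    (h : ∀ i, combNormalize P num (ts i) = combNormalize P num (ts' i)) :
    combNormalize P num (.app c ts) = combNormalize P num (.app c ts') := by
  rcases c with g | b
  · by_cases hg : P g
    · simp only [combNormalize_app_inl_of_pos hg, h]
    · simp only [combNormalize_app_inl_of_neg hg, h]
  · simp only [combNormalize_app_inr, h]

theorem step_combTRS {g : γ} (hg : ¬ P g) (ts : Fin (arγ g) → 𝕋) :
    Step (combTRS P num) (.app (.inl g) ts) (fE (leftCombFill ts) (rightCombE (num g))) := by
  have hrule : (Tm.app (Sum.inl g) fun i => Tm.var (i : Fin (arγ g)).1,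
      fE (leftCombE (arγ g)) (rightCombE (num g))) ∈ combTRS P num := ⟨g, hg, rfl⟩
  let θ : ℕ → 𝕋 := fun n => if h : n < arγ g then ts ⟨n, h⟩ else shE
  have hθ : (fun i : Fin (arγ g) => θ i) = ts := funext fun i => dif_pos i.2
  -- `simp` does not identify `Fin (arExt arγ (.inl g))` with `Fin (arγ g)`
  have hθ' : (fun i : Fin (arExt arγ (.inl g)) => θ i) = ts := hθ
  simpa only [Tm.subst, subst_fE, subst_leftCombE, subst_rightCombE, hθ, hθ'] using
    Step.rule θ hrule

theorem combNormalize_eq_of_step {u v : 𝕋} (h : Step (combTRS P num) u v) :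
    combNormalize P num u = combNormalize P num v := by
  induction h with
  | rule θ hrule =>
    obtain ⟨g, hg, hlr⟩ := hrule
    cases hlr
    rw [subst_fE, subst_leftCombE, subst_rightCombE, combNormalize_fE, combNormalize_leftCombFill,
      combNormalize_rightCombE]
    exact combNormalize_app_inl_of_neg hg _
  | congr i _ ih =>
    refine combNormalize_app_congr fun j => ?_
    by_cases hj : j = i
    · subst hj; rw [Function.update_self, ih]
    · rw [Function.update_of_ne hj]

theorem combNormalize_eq_of_steps {u v : 𝕋} (h : Steps (combTRS P num) u v) :
    combNormalize P num u = combNormalize P num v := by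
  induction h with
  | refl => rfl
  | tail _ hstep ih => exact ih.trans (combNormalize_eq_of_step hstep)

theorem steps_combNormalize (u : 𝕋) : Steps (combTRS P num) u (combNormalize P num u) := by
  induction u with
  | var n => exact Relation.ReflTransGen.refl
  | app c ts ih =>
    have hargs := Steps.app_congr (c := c) ih
    rcases c with g | b
    · by_cases hg : P g
      · rw [combNormalize_app_inl_of_pos hg]; exact hargs
      · rw [combNormalize_app_inl_of_neg hg]; exact hargs.tail (step_combTRS hg _)
    · rw [combNormalize_app_inr]; exact hargs

theorem exists_symOccurs_of_step {u v : 𝕋} (h : Step (combTRS P num) u v) :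
    ∃ g, ¬ P g ∧ u.symOccurs (.inl g) := by
  induction h with
  | rule θ hrule =>
    obtain ⟨g, hg, hlr⟩ := hrule
    cases hlr
    exact ⟨g, hg, Or.inl rfl⟩
  | congr i _ ih =>
    obtain ⟨g, hg, hocc⟩ := ih
    exact ⟨g, hg, Or.inr ⟨i, hocc⟩⟩

theorem symOccurs_fE {a b : 𝕋} {g : γ} :
    (fE a b).symOccurs (.inl g) ↔ a.symOccurs (.inl g) ∨ b.symOccurs (.inl g) := by
  show (Sum.inr true = Sum.inl g ∨ ∃ i : Fin 2, (![a, b] i).symOccurs (.inl g)) ↔ _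
  simp [Fin.exists_fin_two]

theorem not_symOccurs_shE (g : γ) : ¬ (shE : 𝕋).symOccurs (.inl g) := by
  rintro (h | ⟨i, _⟩)
  · cases h
  · exact i.elim0

theorem not_symOccurs_rightCombE (n : ℕ) (g : γ) : ¬ (rightCombE n : 𝕋).symOccurs (.inl g) := by
  induction n with
  | zero => exact not_symOccurs_shE g
  | succ n ih => simpa [rightCombE, symOccurs_fE, not_symOccurs_shE] using ih

theorem exists_symOccurs_of_leftCombFill {k : ℕ} {ts : Fin k → 𝕋} {g : γ}
    (h : (leftCombFill ts).symOccurs (.inl g)) : ∃ i, (ts i).symOccurs (.inl g) := by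
  induction k with
  | zero => exact absurd h (not_symOccurs_shE g)
  | succ k ih =>
    rcases symOccurs_fE.mp h with h | h
    · obtain ⟨i, hi⟩ := ih h
      exact ⟨i.castSucc, hi⟩
    · exact ⟨Fin.last k, h⟩

theorem symOccurs_combNormalize {u : 𝕋} {g : γ}
    (h : (combNormalize P num u).symOccurs (.inl g)) : P g := by
  induction u with
  | var n => exact h.elim
  | app c ts ih =>
    rcases c with g' | b
    · by_cases hg' : P g'
      · rw [combNormalize_app_inl_of_pos hg'] at h
        rcases h with h | ⟨i, hi⟩
        · exact Sum.inl_injective h ▸ hg'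
        · exact ih i hi
      · rw [combNormalize_app_inl_of_neg hg', symOccurs_fE] at h
        rcases h with h | h
        · obtain ⟨i, hi⟩ := exists_symOccurs_of_leftCombFill h
          exact ih i hi
        · exact absurd h (not_symOccurs_rightCombE _ _)
    · rw [combNormalize_app_inr] at h
      rcases h with h | ⟨i, hi⟩
      · cases h
      · exact ih i hi

theorem combNormalize_eq_self {u : 𝕋} (h : ¬ ∃ v, Step (combTRS P num) u v) :
    combNormalize P num u = u := by
  induction u with
  | var n => rfl
  | app c ts ih =>
    have hargs : ∀ i, combNormalize P num (ts i) = ts i :=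
      fun i => ih i fun ⟨v, hv⟩ => h ⟨_, Step.congr i hv⟩
    rcases c with g | b
    · by_cases hg : P g
      · simp only [combNormalize_app_inl_of_pos hg, hargs]
      · exact absurd ⟨_, step_combTRS hg ts⟩ h
    · simp only [combNormalize_app_inr, hargs]

theorem normalFormOf_combTRS_iff {w u : 𝕋} :
    NormalFormOf (combTRS P num) w u ↔ u = combNormalize P num w := by
  constructor
  · rintro ⟨hsteps, hirr⟩
    rw [← combNormalize_eq_self hirr, combNormalize_eq_of_steps hsteps]
  · rintro rfl
    refine ⟨steps_combNormalize w, fun ⟨v, hv⟩ => ?_⟩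
    obtain ⟨g, hg, hocc⟩ := exists_symOccurs_of_step hv
    exact hg (symOccurs_combNormalize hocc)

noncomputable def combNF (P : γ → Prop) (num : γ → ℕ) (t : Tm γ arγ) : 𝕋 :=
  combNormalize P num (t.map Sum.inl fun _ => rfl)

theorem combNF_app_of_pos {g : γ} (hg : P g) (ts : Fin (arγ g) → Tm γ arγ) :
    combNF P num (.app g ts) = .app (.inl g) fun i => combNF P num (ts i) :=
  combNormalize_app_inl_of_pos hg _

theorem combNF_app_of_neg {g : γ} (hg : ¬ P g) (ts : Fin (arγ g) → Tm γ arγ) :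
    combNF P num (.app g ts) =
      fE (leftCombFill fun i => combNF P num (ts i)) (rightCombE (num g)) :=
  combNormalize_app_inl_of_neg hg _

theorem combNF_app_ne_var (g : γ) (ts : Fin (arγ g) → Tm γ arγ) (n : ℕ) :
    combNF P num (.app g ts) ≠ .var n := by
  by_cases hg : P g
  · rw [combNF_app_of_pos hg]; rintro ⟨⟩
  · rw [combNF_app_of_neg hg]; rintro ⟨⟩

theorem combNF_injective (hnum : Set.InjOn num {g | ¬ P g}) :
    Function.Injective (combNF (arγ := arγ) P num) := by
  intro t
  induction t with
  | var n =>
    rintro (m | ⟨g, ts⟩) h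
    · exact congrArg _ (Tm.var.inj h)
    · exact absurd h.symm (combNF_app_ne_var _ _ _)
  | app g ts ih =>
    rintro (m | ⟨g', ts'⟩) h
    · exact absurd h (combNF_app_ne_var _ _ _)
    by_cases hg : P g <;> by_cases hg' : P g'
    · rw [combNF_app_of_pos hg, combNF_app_of_pos hg'] at h
      obtain ⟨h_sym, h_args⟩ := Tm.app.inj h
      obtain rfl := Sum.inl_injective h_sym
      exact congrArg _ (funext fun i => ih i (congrFun (eq_of_heq h_args) i))
    · rw [combNF_app_of_pos hg, combNF_app_of_neg hg'] at h; cases h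
    · rw [combNF_app_of_neg hg, combNF_app_of_pos hg'] at h; cases h
    · rw [combNF_app_of_neg hg, combNF_app_of_neg hg'] at h
      obtain ⟨h_left, h_right⟩ := fE_inj.mp h
      obtain rfl : g = g' := hnum hg hg' (rightCombE_injective h_right)
      exact congrArg _ (funext fun i => ih i (congrFun (leftCombFill_injective h_left) i))

theorem reach_fE_iff {a b : 𝕋} {q : Q} :
    B.Reach (fE a b) q ↔ ∃ p₁ p₂ q₀, B.Reach a p₁ ∧ B.Reach b p₂ ∧
      B.trans (.inr true) ![p₁, p₂] q₀ ∧ Relation.ReflTransGen B.eps q₀ q := by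
  refine BTA.reach_app_iff.trans ?_
  constructor
  · rintro ⟨qs, q₀, hr, htr, he⟩
    rw [← FinVec.etaExpand_eq qs] at htr
    exact ⟨qs (0 : Fin 2), qs (1 : Fin 2), q₀, hr (0 : Fin 2), hr (1 : Fin 2), htr, he⟩
  · rintro ⟨p₁, p₂, q₀, ha, hb, htr, he⟩
    refine ⟨![p₁, p₂], q₀, fun i => ?_, htr, he⟩
    fin_cases i
    exacts [ha, hb]

theorem BTA.Reach.fE {a b : 𝕋} {p₁ p₂ q : Q} (ha : B.Reach a p₁) (hb : B.Reach b p₂)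
    (htr : B.trans (.inr true) ![p₁, p₂] q) : B.Reach (fE a b) q :=
  reach_fE_iff.mpr ⟨p₁, p₂, q, ha, hb, htr, .refl⟩

def LeftCombRun (B : BTA (γ ⊕ Bool) (arExt arγ) Q) : (k : ℕ) → (Fin k → Q) → Q → Prop
  | 0, _, p => B.Reach shE p
  | k + 1, qs, p => ∃ a q₀, LeftCombRun B k (Fin.init qs) a ∧
      B.trans (.inr true) ![a, qs (Fin.last k)] q₀ ∧ Relation.ReflTransGen B.eps q₀ p

theorem reach_leftCombFill_iff {k : ℕ} {ts : Fin k → 𝕋} {p : Q} :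
    B.Reach (leftCombFill ts) p ↔ ∃ qs, (∀ i, B.Reach (ts i) (qs i)) ∧ LeftCombRun B k qs p := by
  induction k generalizing p with
  | zero => exact ⟨fun h => ⟨Fin.elim0, fun i => i.elim0, h⟩, fun ⟨_, _, h⟩ => h⟩
  | succ k ih =>
    rw [leftCombFill, reach_fE_iff]
    constructor
    · rintro ⟨a, b, q₀, ha, hb, htr, he⟩
      obtain ⟨qs, hqs, hrun⟩ := ih.mp ha
      refine ⟨Fin.snoc qs b, fun i => ?_, a, q₀, ?_, ?_, he⟩
      · refine Fin.lastCases ?_ (fun j => ?_) i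
        · rw [Fin.snoc_last]; exact hb
        · rw [Fin.snoc_castSucc]; exact hqs j
      · rwa [Fin.init_snoc]
      · rwa [Fin.snoc_last]
    · rintro ⟨qs, hqs, a, q₀, hrun, htr, he⟩
      exact ⟨a, _, q₀, ih.mpr ⟨Fin.init qs, fun i => hqs _, hrun⟩, hqs _, htr, he⟩

def combPullback (B : BTA (γ ⊕ Bool) (arExt arγ) Q) (P : γ → Prop) (num : γ → ℕ) :
    BTA γ arγ Q where
  trans g qs q := (P g ∧ B.trans (.inl g) qs q) ∨
    (¬ P g ∧ ∃ a b, LeftCombRun B (arγ g) qs a ∧ B.Reach (rightCombE (num g)) b ∧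
      B.trans (.inr true) ![a, b] q)
  eps := B.eps
  final := B.final

theorem reach_combPullback_iff {t : Tm γ arγ} {q : Q} :
    (combPullback B P num).Reach t q ↔ B.Reach (combNF P num t) q := by
  induction t generalizing q with
  | var n => exact iff_of_false (BTA.not_reach_var _ _) (BTA.not_reach_var _ _)
  | app g ts ih =>
    rw [BTA.reach_app_iff]
    simp only [ih]
    by_cases hg : P g
    · rw [combNF_app_of_pos hg, BTA.reach_app_iff]
      simp only [combPullback, hg, true_and, not_true_eq_false, false_and, or_false]
      exact Iff.rfl
    · rw [combNF_app_of_neg hg, reach_fE_iff]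
      simp only [combPullback, hg, false_and, false_or, not_false_eq_true, true_and,
        reach_leftCombFill_iff]
      constructor
      · rintro ⟨qs, q₀, hqs, ⟨a, b, hrun, hb, htr⟩, he⟩
        exact ⟨a, b, q₀, ⟨qs, hqs, hrun⟩, hb, htr, he⟩
      · rintro ⟨a, b, q₀, ⟨qs, hqs, hrun⟩, hb, htr, he⟩
        exact ⟨qs, q₀, hqs, ⟨a, b, hrun, hb, htr⟩, he⟩

theorem lang_combPullback : (combPullback B P num).Lang = combNF P num ⁻¹' B.Lang := by
  ext t
  simp only [BTA.Lang, Set.mem_preimage, reach_combPullback_iff]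
  rfl

abbrev CombState (Q : Type) (M : ℕ) : Type := Q ⊕ Fin (M + 1) ⊕ (Σ k : Fin (M + 1), Fin k → Q)

def CombState.sym (q : Q) : CombState Q M := .inl q

def CombState.right (n : Fin (M + 1)) : CombState Q M := .inr (.inl n)

def CombState.left (k : Fin (M + 1)) (qs : Fin k → Q) : CombState Q M := .inr (.inr ⟨k, qs⟩)

def CombState.Denotes (A : BTA γ arγ Q) (P : γ → Prop) (num : γ → ℕ) :
    CombState Q M → 𝕋 → Prop
  | .inl q, u => ∃ t, A.Reach t q ∧ u = combNF P num t
  | .inr (.inl n), u => u = rightCombE n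
  | .inr (.inr ⟨k, qs⟩), u =>
    ∃ ts : Fin k → Tm γ arγ, (∀ i, A.Reach (ts i) (qs i)) ∧ u = leftCombFill fun i => combNF P num (ts i)

inductive CombForwardTrans (A : BTA γ arγ Q) (P : γ → Prop) (num : γ → ℕ) (M : ℕ) :
    (c : γ ⊕ Bool) → (Fin (arExt arγ c) → CombState Q M) → CombState Q M → Prop
  | sym {g : γ} (hg : P g) {qs : Fin (arγ g) → Q} {q : Q} (h : A.trans g qs q) :
      CombForwardTrans A P num M (.inl g) (fun i => .sym (qs i)) (.sym q)
  | sharpRight {qs : Fin 0 → CombState Q M} :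
      CombForwardTrans A P num M (.inr false) qs (.right ⟨0, M.succ_pos⟩)
  | sharpLeft {qs : Fin 0 → CombState Q M} :
      CombForwardTrans A P num M (.inr false) qs (.left ⟨0, M.succ_pos⟩ Fin.elim0)
  | rightSucc (n : Fin M) :
      CombForwardTrans A P num M (.inr true) ![.right ⟨0, M.succ_pos⟩, .right n.castSucc]
        (.right n.succ)
  | leftSnoc (k : Fin M) (qs : Fin k → Q) (q : Q) :
      CombForwardTrans A P num M (.inr true) ![.left k.castSucc qs, .sym q]
        (.left k.succ (Fin.snoc qs q))
  | close {g : γ} (hg : ¬ P g) (hk : arγ g < M + 1) (hn : num g < M + 1) {qs : Fin (arγ g) → Q}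
      {q : Q} (h : A.trans g qs q) :
      CombForwardTrans A P num M (.inr true) ![.left ⟨arγ g, hk⟩ qs, .right ⟨num g, hn⟩] (.sym q)

def combForward (A : BTA γ arγ Q) (P : γ → Prop) (num : γ → ℕ) (M : ℕ) :
    BTA (γ ⊕ Bool) (arExt arγ) (CombState Q M) where
  trans := CombForwardTrans A P num M
  eps s s' := ∃ q q', s = .sym q ∧ s' = .sym q' ∧ A.eps q q'
  final s := ∃ q, s = .sym q ∧ A.final q

theorem CombState.denotes_of_reach {u : 𝕋} {s : CombState Q M}
    (h : (combForward A P num M).Reach u s) : s.Denotes A P num u := by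
  induction h with
  | app _ htr ih =>
    cases htr with
    | sym hg htr =>
      choose tf hA hts using ih
      exact ⟨.app _ tf, .app hA htr, (congrArg _ (funext hts)).trans (combNF_app_of_pos hg tf).symm⟩
    | sharpRight => exact app_inr_false_eq_shE _
    | sharpLeft => exact ⟨Fin.elim0, fun i => i.elim0, app_inr_false_eq_shE _⟩
    | rightSucc n =>
      have h₀ : _ = _ := ih (0 : Fin 2)
      have h₁ : _ = _ := ih (1 : Fin 2)
      show _ = fE _ _
      rw [app_inr_true_eq_fE, h₀, h₁]
      rfl
    | leftSnoc k qs q =>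
      obtain ⟨tf, hA, h₀⟩ := ih (0 : Fin 2)
      obtain ⟨t, hAt, h₁⟩ := ih (1 : Fin 2)
      refine ⟨Fin.snoc tf t, fun i => ?_, ?_⟩
      · refine Fin.lastCases ?_ (fun j => ?_) i
        · rw [Fin.snoc_last, Fin.snoc_last]; exact hAt
        · rw [Fin.snoc_castSucc, Fin.snoc_castSucc]; exact hA j
      · rw [app_inr_true_eq_fE, h₀, h₁, ← leftCombFill_snoc]
        exact congrArg _ (Fin.comp_snoc (combNF P num) tf t).symm
    | close hg hk hn htr =>
      obtain ⟨tf, hA, h₀⟩ := ih (0 : Fin 2)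
      have h₁ : _ = _ := ih (1 : Fin 2)
      refine ⟨.app _ tf, .app hA htr, ?_⟩
      rw [combNF_app_of_neg hg, app_inr_true_eq_fE, h₀, h₁]
  | eps _ he ih =>
    obtain ⟨q, q', rfl, rfl, hq⟩ := he
    obtain ⟨t, hA, rfl⟩ := ih
    exact ⟨t, hA.eps hq, rfl⟩

theorem reach_combForward_shE_right :
    (combForward A P num M).Reach shE (.right ⟨0, M.succ_pos⟩) :=
  BTA.Reach.app (f := Sum.inr false) (qs := Fin.elim0) (fun i => i.elim0)
    CombForwardTrans.sharpRight

theorem reach_combForward_shE_left :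
    (combForward A P num M).Reach shE (.left ⟨0, M.succ_pos⟩ Fin.elim0) :=
  BTA.Reach.app (f := Sum.inr false) (qs := Fin.elim0) (fun i => i.elim0)
    CombForwardTrans.sharpLeft

theorem reach_combForward_rightCombE {n : ℕ} (hn : n < M + 1) :
    (combForward A P num M).Reach (rightCombE n) (.right ⟨n, hn⟩) := by
  induction n with
  | zero => exact reach_combForward_shE_right
  | succ n ih => exact .fE reach_combForward_shE_right (ih (by omega)) (.rightSucc ⟨n, by omega⟩)

theorem reach_combForward_leftCombFill {k : ℕ} (hk : k < M + 1) {ts : Fin k → 𝕋} {qs : Fin k → Q}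
    (h : ∀ i, (combForward A P num M).Reach (ts i) (.sym (qs i))) :
    (combForward A P num M).Reach (leftCombFill ts) (.left ⟨k, hk⟩ qs) := by
  induction k with
  | zero =>
    rw [show qs = Fin.elim0 from funext fun i => i.elim0]
    exact reach_combForward_shE_left
  | succ k ih =>
    rw [← Fin.snoc_init_self qs]
    exact .fE (ih (by omega) fun i => h _) (h _) (.leftSnoc ⟨k, by omega⟩ _ _)

theorem reach_combForward_combNF (har : ∀ g, arγ g < M + 1) (hnum : ∀ g, num g < M + 1)
    {t : Tm γ arγ} {q : Q} (h : A.Reach t q) :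
    (combForward A P num M).Reach (combNF P num t) (.sym q) := by
  induction h with
  | @app g ts qs q _ htr ih =>
    by_cases hg : P g
    · rw [combNF_app_of_pos hg]
      exact .app (fun i => ih i) (.sym hg htr)
    · rw [combNF_app_of_neg hg]
      exact .fE (reach_combForward_leftCombFill (har g) ih) (reach_combForward_rightCombE (hnum g))
        (.close hg (har g) (hnum g) htr)
  | eps _ hq ih => exact ih.eps ⟨_, _, rfl, rfl, hq⟩

theorem lang_combForward (har : ∀ g, arγ g < M + 1) (hnum : ∀ g, num g < M + 1) :
    (combForward A P num M).Lang = combNF P num '' A.Lang := by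
  ext u
  constructor
  · rintro ⟨_, ⟨q, rfl, hq⟩, hu⟩
    obtain ⟨t, ht, rfl⟩ := CombState.denotes_of_reach hu
    exact ⟨t, ⟨q, hq, ht⟩, rfl⟩
  · rintro ⟨t, ⟨q, hq, ht⟩, rfl⟩
    exact ⟨.sym q, ⟨q, rfl, hq⟩, reach_combForward_combNF har hnum ht⟩

theorem Recognizable.image_combNF [Finite γ] (hL : Recognizable L) :
    Recognizable (combNF P num '' L) := by
  obtain ⟨Q, _, A, rfl⟩ := hL
  obtain ⟨M, hM⟩ := (Set.finite_range fun g => arγ g + num g).bddAbove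
  have hbound (g : γ) : arγ g + num g ≤ M := hM ⟨g, rfl⟩
  exact ⟨CombState Q M, inferInstance, combForward A P num M,
    lang_combForward (fun g => by have := hbound g; omega) (fun g => by have := hbound g; omega)⟩

theorem Recognizable.of_image_combNF (hinj : Function.Injective (combNF (arγ := arγ) P num))
    (h : Recognizable (combNF P num '' L)) : Recognizable L := by
  obtain ⟨Q, _, B, hB⟩ := h
  exact ⟨Q, inferInstance, combPullback B P num, by rw [lang_combPullback, hB, hinj.preimage_image]⟩

end Comb

theorem stmt_10_general {σ γ : Type} {arγ : γ → ℕ} [Finite γ]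
    -- `Γ` is a ranked alphabet with `sign(R) ⊆ Γ`
    (ι : σ → γ)
    -- a numbering of the symbols of `Γ − sign(R)` from `1` to `|Γ − sign(R)|`
    (num : γ → ℕ)
    (hnum : Set.BijOn num {g : γ | g ∉ Set.range ι}
      (Set.Icc 1 (Nat.card {g : γ // g ∉ Set.range ι})))
    -- a tree language `L ⊆ T_Γ`
    (L : Set (Tm γ arγ)) :
    -- `S(L)`: the set of `S`-normal forms of members of `L`
    (L.Finite ↔
      {u : Tm (γ ⊕ Bool) (arExt arγ) | ∃ t ∈ L,
        NormalFormOf (combTRS (arγ := arγ) (· ∈ Set.range ι) num)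
          (t.map Sum.inl fun _ => rfl) u}.Finite) ∧
    (Recognizable L ↔
      Recognizable {u : Tm (γ ⊕ Bool) (arExt arγ) | ∃ t ∈ L,
        NormalFormOf (combTRS (arγ := arγ) (· ∈ Set.range ι) num)
          (t.map Sum.inl fun _ => rfl) u}) := by
  have hinj : Function.Injective (combNF (arγ := arγ) (· ∈ Set.range ι) num) :=
    combNF_injective hnum.injOn
  have hSL : {u : Tm (γ ⊕ Bool) (arExt arγ) | ∃ t ∈ L,
      NormalFormOf (combTRS (arγ := arγ) (· ∈ Set.range ι) num) (t.map Sum.inl fun _ => rfl) u} =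
      combNF (· ∈ Set.range ι) num '' L := by
    ext u
    simp only [normalFormOf_combTRS_iff, combNF, Set.mem_image, eq_comm]
    rfl
  rw [hSL]
  exact ⟨(Set.finite_image_iff hinj.injOn).symm,
    ⟨Recognizable.image_combNF, Recognizable.of_image_combNF hinj⟩⟩

theorem stmt_10 {σ γ : Type} {ar : σ → ℕ} {arγ : γ → ℕ} [Finite σ] [Finite γ]
    (R : Set (Tm σ ar × Tm σ ar)) (hR : IsTRS R)
    -- `R` is a TRS over `sign(R)`: every symbol of `σ` occurs in `R`
    (hsign : ∀ s : σ, ∃ lr ∈ R, lr.1.symOccurs s ∨ lr.2.symOccurs s)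
    -- `Γ` is a ranked alphabet with `sign(R) ⊆ Γ`
    (ι : σ → γ) (hinj : Function.Injective ι) (har : ∀ s, arγ (ι s) = ar s)
    -- a numbering of the symbols of `Γ − sign(R)` from `1` to `|Γ − sign(R)|`
    (num : γ → ℕ)
    (hnum : Set.BijOn num {g : γ | g ∉ Set.range ι}
      (Set.Icc 1 (Nat.card {g : γ // g ∉ Set.range ι})))
    -- a tree language `L ⊆ T_Γ`
    (L : Set (Tm γ arγ)) (hground : ∀ t ∈ L, t.Ground) :
    -- `S(L)`: the set of `S`-normal forms of members of `L`
    (L.Finite ↔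
      {u : Tm (γ ⊕ Bool) (arExt arγ) | ∃ t ∈ L,
        NormalFormOf (combTRS (arγ := arγ) (· ∈ Set.range ι) num)
          (t.map Sum.inl fun _ => rfl) u}.Finite) ∧
    (Recognizable L ↔
      Recognizable {u : Tm (γ ⊕ Bool) (arExt arγ) | ∃ t ∈ L,
        NormalFormOf (combTRS (arγ := arγ) (· ∈ Set.range ι) num)
          (t.map Sum.inl fun _ => rfl) u}) :=
  stmt_10_general ι num hnum L
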